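/- Theorem 1(iii) (explicit lower bound β̂ for the critical coefficient): One has π > 0 and β̂ ∈ (0,1), the direction d(β̂) satisfies the angle criterion −⟪g, d(β̂)⟫ ≥ ε ‖g‖ ‖d(β̂)‖, and consequently β̂ ≤ β* for any β* ∈ (0,1) with Φ(β*) = ε. -/
import Mathlib


open scoped RealInnerProductSpace

noncomputable def dvec {n : ℕ} (g d : EuclideanSpace ℝ (Fin n)) (ξ β : ℝ) :
    EuclideanSpace ℝ (Fin n) :=
  β • d - ((1 - β) * ξ) • g

noncomputable def Phi {n : ℕ} (g d : EuclideanSpace ℝ (Fin n)) (ξ β : ℝ) : ℝ :=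
  -⟪g, dvec g d ξ β⟫ / (‖g‖ * ‖dvec g d ξ β‖)

noncomputable def rho (ξ ε : ℝ) : ℝ := ξ * (1 - ε)

noncomputable def piV {n : ℕ} (g d : EuclideanSpace ℝ (Fin n)) (ε : ℝ) : ℝ :=
  ⟪g, d⟫ / ‖g‖ ^ 2 + ε * ‖d‖ / ‖g‖

noncomputable def betahat {n : ℕ} (g d : EuclideanSpace ℝ (Fin n)) (ξ ε : ℝ) : ℝ :=
  rho ξ ε / (rho ξ ε + piV g d ε)

lemma inner_dvec {n : ℕ} (g d : EuclideanSpace ℝ (Fin n)) (ξ β : ℝ) :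
    ⟪g, dvec g d ξ β⟫ = β * ⟪g, d⟫ - (1 - β) * ξ * ‖g‖ ^ 2 := by
  rw [dvec, inner_sub_right, real_inner_smul_right, real_inner_smul_right,
    real_inner_self_eq_norm_sq]

lemma norm_dvec_le {n : ℕ} (g d : EuclideanSpace ℝ (Fin n)) (ξ β : ℝ)
    (hβ0 : 0 ≤ β) (hβ1 : β ≤ 1) (hξ : 0 ≤ ξ) :
    ‖dvec g d ξ β‖ ≤ β * ‖d‖ + (1 - β) * ξ * ‖g‖ := by
  calc ‖dvec g d ξ β‖ ≤ ‖β • d‖ + ‖((1 - β) * ξ) • g‖ := norm_sub_le _ _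
    _ = |β| * ‖d‖ + |(1 - β) * ξ| * ‖g‖ := by rw [norm_smul, norm_smul]; rfl
    _ = β * ‖d‖ + (1 - β) * ξ * ‖g‖ := by
        rw [abs_of_nonneg hβ0, abs_of_nonneg (by nlinarith)]

/-- Theorem 1(iii): π > 0, β̂ ∈ (0,1), the direction d(β̂) satisfies the angle criterion,
and β̂ is a lower bound for any β* ∈ (0,1) with Φ(β*) = ε. -/
theorem betahat_lower_bound {n : ℕ} (g d : EuclideanSpace ℝ (Fin n))
    (hind : LinearIndependent ℝ ![g, d]) (ε ξ : ℝ)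
    (hε : ε ∈ Set.Ioo (0 : ℝ) 1) (hξ : 0 < ξ)
    (hviol : -⟪g, d⟫ < ε * ‖g‖ * ‖d‖) :
    0 < piV g d ε ∧
    betahat g d ξ ε ∈ Set.Ioo (0 : ℝ) 1 ∧
    -⟪g, dvec g d ξ (betahat g d ξ ε)⟫ ≥ ε * ‖g‖ * ‖dvec g d ξ (betahat g d ξ ε)‖ ∧
    ∀ βs ∈ Set.Ioo (0 : ℝ) 1, Phi g d ξ βs = ε → betahat g d ξ ε ≤ βs := by
  obtain ⟨hε0, hε1⟩ := hε
  have hg : g ≠ 0 := by simpa using hind.ne_zero 0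
  have hG : 0 < ‖g‖ := norm_pos_iff.mpr hg
  have hkey : 0 < ⟪g, d⟫ + ε * ‖g‖ * ‖d‖ := by linarith
  have hPval : piV g d ε = (⟪g, d⟫ + ε * ‖g‖ * ‖d‖) / ‖g‖ ^ 2 := by
    rw [piV]; field_simp
  have hP : 0 < piV g d ε := by
    rw [hPval]; exact div_pos hkey (by positivity)
  have hR : 0 < rho ξ ε := by rw [rho]; nlinarith
  have hRP : 0 < rho ξ ε + piV g d ε := by linarith
  set b := betahat g d ξ ε with hb
  have hb0 : 0 < b := div_pos hR hRP
  have hb1 : b < 1 := (div_lt_one hRP).mpr (by linarith)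
  have hbal : (1 - b) * rho ξ ε = b * piV g d ε := by
    rw [hb, betahat]; field_simp; ring
  have hPG : piV g d ε * ‖g‖ ^ 2 = ⟪g, d⟫ + ε * ‖g‖ * ‖d‖ := by
    rw [hPval]; field_simp
  refine ⟨hP, ⟨hb0, hb1⟩, ?_, ?_⟩
  · have hn := norm_dvec_le g d ξ b hb0.le hb1.le hξ.le
    rw [inner_dvec]
    have h1 : ε * ‖g‖ * ‖dvec g d ξ b‖ ≤ ε * ‖g‖ * (b * ‖d‖ + (1 - b) * ξ * ‖g‖) := by
      apply mul_le_mul_of_nonneg_left hn (by positivity)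
    have h2 : (1 - b) * rho ξ ε * ‖g‖ ^ 2 = b * (piV g d ε * ‖g‖ ^ 2) := by
      linear_combination ‖g‖ ^ 2 * hbal
    rw [hPG] at h2
    rw [rho] at h2
    nlinarith [sq_nonneg ‖g‖]
  · intro β hβ hΦ
    obtain ⟨hβ0, hβ1⟩ := hβ
    set N := ‖dvec g d ξ β‖ with hN
    have hNne : N ≠ 0 := by
      intro h
      rw [Phi, ← hN, h, mul_zero, div_zero] at hΦ
      linarith
    have hNpos : 0 < N := lt_of_le_of_ne (norm_nonneg _) (Ne.symm hNne)
    have heq : -⟪g, dvec g d ξ β⟫ = ε * (‖g‖ * N) := by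
      have := hΦ
      rw [Phi, ← hN, div_eq_iff (by positivity)] at this
      linarith [this]
    rw [inner_dvec] at heq
    have hn := norm_dvec_le g d ξ β hβ0.le hβ1.le hξ.le
    rw [← hN] at hn
    have h3 : ε * (‖g‖ * N) ≤ ε * ‖g‖ * (β * ‖d‖ + (1 - β) * ξ * ‖g‖) := by
      have : ε * (‖g‖ * N) = ε * ‖g‖ * N := by ring
      rw [this]
      exact mul_le_mul_of_nonneg_left hn (by positivity)
    -- (1-β) ρ G² ≤ β (I + ε G D) = β P G²
    have h4 : (1 - β) * rho ξ ε * ‖g‖ ^ 2 ≤ β * (piV g d ε * ‖g‖ ^ 2) := by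
      rw [hPG, rho]; nlinarith
    have h5 : (1 - β) * rho ξ ε ≤ β * piV g d ε := by
      have hg2 : (0:ℝ) < ‖g‖ ^ 2 := by positivity
      nlinarith
    rw [hb, betahat, div_le_iff₀ hRP]
    nlinarith
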